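/- arXiv:1909.04383 — 3 statements merged into one kernel-verified Lean document; each statement's English description precedes it below -/
import Mathlib

section
/- Assume θ = 0. The free chain with parameters (λ₁, λ_tot, μ, 0) admits a stationary distribution if and only if λ₁ + λ_tot < μ; moreover, when λ₁ + λ_tot < μ, every stationary distribution π satisfies Σ_{x∈ℕ²} (x₁ + x₂)·π(x) < ∞. -/
open Filter Topology

/-- `π` is a stationary distribution of the free chain with parameters
`(l1, lt, mu, th)` (arrival rates `l1`, `lt`, service rate `mu`, mobility rate `th`). -/
def IsStationaryFree (l1 lt mu th : ℝ) (π : ℕ × ℕ → ℝ) : Prop :=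
  (∀ x, 0 ≤ π x) ∧ HasSum π 1 ∧
    ∀ x1 x2 : ℕ,
      π (x1, x2) * (l1 + lt + (if (x1, x2) ≠ ((0 : ℕ), (0 : ℕ)) then mu else 0)
          + th * (x2 : ℝ))
        = l1 * (if 1 ≤ x1 then π (x1 - 1, x2) else 0)
          + lt * (if 1 ≤ x2 then π (x1, x2 - 1) else 0)
          + mu * ((x1 : ℝ) + 1) / ((x1 : ℝ) + 1 + (x2 : ℝ)) * π (x1 + 1, x2)
          + (mu * ((x2 : ℝ) + 1) / ((x1 : ℝ) + (x2 : ℝ) + 1) + th * ((x2 : ℝ) + 1))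
              * π (x1, x2 + 1)

/-!
With `θ = 0` the total population `x₁ + x₂` evolves as an M/M/1 queue with arrival rate
`λ₁ + λ_tot` and service rate `μ`. Summing the balance equations over the level
`{x₁ + x₂ = n}` gives the cut equations `(λ₁ + λ_tot) P(n) = μ P(n + 1)` for the level masses,
so `P(n) = ρⁿ P(0)` with `ρ = (λ₁ + λ_tot) / μ`. A stationary distribution thus makes the
geometric series `∑ ρⁿ` converge, i.e. `ρ < 1`, and its mean is `P(0) ∑ n ρⁿ < ∞`. Conversely,
for `ρ < 1` the product form `(1 - ρ) (x₁ + x₂ choose x₁) (λ₁/μ)^x₁ (λ_tot/μ)^x₂` (a geometric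
total with a binomial split) satisfies detailed balance.
-/

open Finset

theorem Finset.Nat.sum_antidiagonal_succ_ite_fst {M : Type*} [AddCommMonoid M]
    (f : ℕ × ℕ → M) (n : ℕ) :
    ∑ x ∈ antidiagonal (n + 1), (if 1 ≤ x.1 then f (x.1 - 1, x.2) else 0)
      = ∑ x ∈ antidiagonal n, f x := by
  simp [Nat.sum_antidiagonal_succ]

theorem Finset.Nat.sum_antidiagonal_succ_ite_snd {M : Type*} [AddCommMonoid M]
    (f : ℕ × ℕ → M) (n : ℕ) :
    ∑ x ∈ antidiagonal (n + 1), (if 1 ≤ x.2 then f (x.1, x.2 - 1) else 0)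
      = ∑ x ∈ antidiagonal n, f x := by
  simp [Nat.sum_antidiagonal_succ']

theorem Finset.Nat.sum_antidiagonal_add_one_mul_shift {R : Type*} [Semiring R]
    (f : ℕ × ℕ → R) (n : ℕ) :
    ∑ x ∈ antidiagonal n, (((x.1 : R) + 1) * f (x.1 + 1, x.2) + ((x.2 : R) + 1) * f (x.1, x.2 + 1))
      = ((n : R) + 1) * ∑ x ∈ antidiagonal (n + 1), f x := by
  have hfst : ∑ x ∈ antidiagonal (n + 1), (x.1 : R) * f x
      = ∑ x ∈ antidiagonal n, ((x.1 : R) + 1) * f (x.1 + 1, x.2) := by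
    simp [Nat.sum_antidiagonal_succ]
  have hsnd : ∑ x ∈ antidiagonal (n + 1), (x.2 : R) * f x
      = ∑ x ∈ antidiagonal n, ((x.2 : R) + 1) * f (x.1, x.2 + 1) := by
    simp [Nat.sum_antidiagonal_succ']
  rw [sum_add_distrib, ← hfst, ← hsnd, ← sum_add_distrib, mul_sum]
  refine sum_congr rfl fun x hx => ?_
  rw [← add_mul, ← Nat.cast_add, mem_antidiagonal.mp hx, Nat.cast_succ]

noncomputable def levelSum (f : ℕ × ℕ → ℝ) (n : ℕ) : ℝ := ∑ x ∈ antidiagonal n, f x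

theorem hasSum_levelSum_iff {f : ℕ × ℕ → ℝ} (hf : ∀ x, 0 ≤ f x) {a : ℝ} :
    HasSum (levelSum f) a ↔ HasSum f a := by
  let e := Finset.HasAntidiagonal.sigmaAntidiagonalEquivProd (A := ℕ)
  have hfiber (n : ℕ) : HasSum (fun x : antidiagonal n => f x) (levelSum f n) :=
    (antidiagonal n).hasSum f
  have hlevels {b : ℝ} (h : HasSum f b) : HasSum (levelSum f) b :=
    (e.hasSum_iff.mpr h).sigma hfiber
  refine ⟨fun h => ?_, hlevels⟩
  have hsummable : Summable f := e.summable_iff.mp <|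
    (summable_sigma_of_nonneg fun _ => hf _).mpr
      ⟨fun n => (hfiber n).summable, h.summable.congr fun n => (hfiber n).tsum_eq.symm⟩
  rw [h.unique (hlevels hsummable.hasSum)]
  exact hsummable.hasSum

theorem levelSum_add_mul (f : ℕ × ℕ → ℝ) (n : ℕ) :
    levelSum (fun x => ((x.1 : ℝ) + x.2) * f x) n = n * levelSum f n := by
  rw [levelSum, levelSum, mul_sum]
  refine sum_congr rfl fun x hx => ?_
  rw [← Nat.cast_add, HasAntidiagonal.mem_antidiagonal.mp hx]

namespace IsStationaryFree

variable {l1 lt mu : ℝ} {π : ℕ × ℕ → ℝ}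

theorem cut_zero (hπ : IsStationaryFree l1 lt mu 0 π) :
    (l1 + lt) * levelSum π 0 = mu * levelSum π 1 := by
  have h : π (0, 0) * (l1 + lt) = mu * π (1, 0) + mu * π (0, 1) := by simpa using hπ.2.2 0 0
  have h1 : levelSum π 1 = π (0, 1) + π (1, 0) := by simp [levelSum, Nat.sum_antidiagonal_succ]
  rw [h1, levelSum, Nat.antidiagonal_zero, sum_singleton]
  linear_combination h

theorem balance_levelSum_succ (hπ : IsStationaryFree l1 lt mu 0 π) (n : ℕ) :
    (l1 + lt + mu) * levelSum π (n + 1)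
      = (l1 + lt) * levelSum π n + mu * levelSum π (n + 2) := by
  have hx : ∀ x ∈ antidiagonal (n + 1), π x * (l1 + lt + mu)
      = l1 * (if 1 ≤ x.1 then π (x.1 - 1, x.2) else 0)
        + lt * (if 1 ≤ x.2 then π (x.1, x.2 - 1) else 0)
        + mu / (n + 2)
          * (((x.1 : ℝ) + 1) * π (x.1 + 1, x.2) + ((x.2 : ℝ) + 1) * π (x.1, x.2 + 1)) := by
    rintro ⟨a, b⟩ hab
    rw [HasAntidiagonal.mem_antidiagonal] at hab
    have hne : (a, b) ≠ ((0 : ℕ), (0 : ℕ)) := by grind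
    have hsum : (a : ℝ) + b = n + 1 := by exact_mod_cast hab
    have h := hπ.2.2 a b
    rw [if_pos hne, show (a : ℝ) + 1 + b = n + 2 by linarith,
      show (a : ℝ) + b + 1 = n + 2 by linarith] at h
    linear_combination h
  calc (l1 + lt + mu) * levelSum π (n + 1)
      = ∑ x ∈ antidiagonal (n + 1), π x * (l1 + lt + mu) := by rw [levelSum, mul_comm, sum_mul]
    _ = l1 * levelSum π n + lt * levelSum π n
          + mu / (n + 2) * ((n + 2) * levelSum π (n + 2)) := by
      rw [sum_congr rfl hx, sum_add_distrib, sum_add_distrib, ← mul_sum, ← mul_sum, ← mul_sum,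
        Nat.sum_antidiagonal_succ_ite_fst, Nat.sum_antidiagonal_succ_ite_snd,
        Nat.sum_antidiagonal_add_one_mul_shift]
      simp only [levelSum]
      push_cast
      ring
    _ = (l1 + lt) * levelSum π n + mu * levelSum π (n + 2) := by
      field_simp

theorem cut (hπ : IsStationaryFree l1 lt mu 0 π) (n : ℕ) :
    (l1 + lt) * levelSum π n = mu * levelSum π (n + 1) := by
  induction n with
  | zero => exact hπ.cut_zero
  | succ n ih => linarith [hπ.balance_levelSum_succ n]

theorem levelSum_eq_geometric (hπ : IsStationaryFree l1 lt mu 0 π) (hmu : mu ≠ 0) (n : ℕ) :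
    levelSum π n = ((l1 + lt) / mu) ^ n * levelSum π 0 := by
  induction n with
  | zero => simp
  | succ n ih =>
    rw [pow_succ, mul_right_comm, ← ih]
    field_simp
    linarith [hπ.cut n]

theorem norm_load_lt_one (hπ : IsStationaryFree l1 lt mu 0 π) (hmu : mu ≠ 0) :
    ‖(l1 + lt) / mu‖ < 1 := by
  have hlevels : HasSum (fun n => ((l1 + lt) / mu) ^ n * levelSum π 0) 1 := by
    simpa only [← hπ.levelSum_eq_geometric hmu] using (hasSum_levelSum_iff hπ.1).mpr hπ.2.1
  have hmass : levelSum π 0 ≠ 0 := by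
    rintro h
    simp only [h, mul_zero] at hlevels
    exact one_ne_zero (hlevels.unique hasSum_zero)
  exact summable_geometric_iff_norm_lt_one.mp ((summable_mul_right_iff hmass).mp hlevels.summable)

theorem summable_mean (hπ : IsStationaryFree l1 lt mu 0 π) (hmu : mu ≠ 0) :
    Summable (fun x : ℕ × ℕ => ((x.1 : ℝ) + x.2) * π x) := by
  have hmean : Summable (levelSum fun x : ℕ × ℕ => ((x.1 : ℝ) + x.2) * π x) := by
    have hgeom : (levelSum fun x : ℕ × ℕ => ((x.1 : ℝ) + x.2) * π x)
        = fun n : ℕ => (n * ((l1 + lt) / mu) ^ n) * levelSum π 0 :=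
      funext fun n => by rw [levelSum_add_mul, hπ.levelSum_eq_geometric hmu, mul_assoc]
    rw [hgeom]
    exact (hasSum_coe_mul_geometric_of_norm_lt_one (hπ.norm_load_lt_one hmu)).summable.mul_right _
  obtain ⟨s, hs⟩ := hmean
  exact ((hasSum_levelSum_iff fun x => mul_nonneg (by positivity) (hπ.1 x)).mp hs).summable

end IsStationaryFree

theorem isStationaryFree_of_detailed_balance {l1 lt mu th : ℝ} {π : ℕ × ℕ → ℝ}
    (hnn : ∀ x, 0 ≤ π x) (hsum : HasSum π 1)
    (hfst : ∀ a b : ℕ, mu * ((a : ℝ) + 1) / ((a : ℝ) + 1 + b) * π (a + 1, b) = l1 * π (a, b))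
    (hsnd : ∀ a b : ℕ,
      (mu * ((b : ℝ) + 1) / ((a : ℝ) + b + 1) + th * ((b : ℝ) + 1)) * π (a, b + 1)
        = lt * π (a, b)) :
    IsStationaryFree l1 lt mu th π := by
  refine ⟨hnn, hsum, fun a b => ?_⟩
  have hin_fst : l1 * (if 1 ≤ a then π (a - 1, b) else 0) = mu * a / (a + b) * π (a, b) := by
    rcases a with _ | a
    · simp
    · simp only [le_add_iff_nonneg_left, zero_le, if_true, add_tsub_cancel_right, ← hfst a b]
      push_cast
      ring
  have hin_snd : lt * (if 1 ≤ b then π (a, b - 1) else 0)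
      = (mu * b / (a + b) + th * b) * π (a, b) := by
    rcases b with _ | b
    · simp
    · simp only [le_add_iff_nonneg_left, zero_le, if_true, add_tsub_cancel_right, ← hsnd a b]
      push_cast
      ring
  have hout : mu * a / (a + b) + mu * b / (a + b)
      = if (a, b) ≠ ((0 : ℕ), (0 : ℕ)) then mu else 0 := by
    split_ifs with hab
    · have : (a : ℝ) + b ≠ 0 := by
        exact_mod_cast fun h => hab (Prod.ext_iff.mpr (Nat.add_eq_zero_iff.mp h))
      field_simp
    · simp_all
  rw [hin_fst, hin_snd, hfst, hsnd, ← hout]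
  ring

theorem Nat.succ_mul_choose_succ_add (a b : ℕ) :
    (a + 1) * (a + 1 + b).choose (a + 1) = (a + b + 1) * (a + b).choose a := by
  rw [Nat.add_right_comm, Nat.add_one_mul_choose_eq, mul_comm]

theorem Nat.succ_mul_choose_add_succ (a b : ℕ) :
    (b + 1) * (a + (b + 1)).choose a = (a + b + 1) * (a + b).choose a := by
  rw [Nat.choose_symm_add, Nat.choose_symm_add, ← add_assoc, Nat.add_one_mul_choose_eq, mul_comm]

noncomputable def freeProductForm (l1 lt mu : ℝ) (x : ℕ × ℕ) : ℝ :=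
  (1 - (l1 + lt) / mu) * (x.1 + x.2).choose x.1 * (l1 / mu) ^ x.1 * (lt / mu) ^ x.2

section ProductForm

variable {l1 lt mu : ℝ}

theorem freeProductForm_detailed_balance_fst (hmu : mu ≠ 0) (a b : ℕ) :
    mu * ((a : ℝ) + 1) / ((a : ℝ) + 1 + b) * freeProductForm l1 lt mu (a + 1, b)
      = l1 * freeProductForm l1 lt mu (a, b) := by
  have hchoose : mu * ((a : ℝ) + 1) / ((a : ℝ) + 1 + b) * ((a + 1 + b).choose (a + 1) : ℕ)
      = mu * (a + b).choose a := by
    have h : ((a : ℝ) + 1) * ((a + 1 + b).choose (a + 1) : ℕ)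
        = (a + b + 1) * (a + b).choose a := by
      exact_mod_cast Nat.succ_mul_choose_succ_add a b
    rw [mul_div_right_comm, mul_assoc, h, add_right_comm]
    field_simp
  calc _ = mu * ((a : ℝ) + 1) / ((a : ℝ) + 1 + b) * ((a + 1 + b).choose (a + 1) : ℕ)
        * (1 - (l1 + lt) / mu) * (l1 / mu) ^ a * (l1 / mu) * (lt / mu) ^ b := by
        rw [freeProductForm, pow_succ]
        ring
    _ = _ := by
      rw [hchoose, freeProductForm]
      field_simp

theorem freeProductForm_detailed_balance_snd (hmu : mu ≠ 0) (a b : ℕ) :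
    (mu * ((b : ℝ) + 1) / ((a : ℝ) + b + 1) + 0 * ((b : ℝ) + 1))
        * freeProductForm l1 lt mu (a, b + 1) = lt * freeProductForm l1 lt mu (a, b) := by
  have hchoose : mu * ((b : ℝ) + 1) / ((a : ℝ) + b + 1) * ((a + (b + 1)).choose a : ℕ)
      = mu * (a + b).choose a := by
    have h : ((b : ℝ) + 1) * ((a + (b + 1)).choose a : ℕ)
        = (a + b + 1) * (a + b).choose a := by
      exact_mod_cast Nat.succ_mul_choose_add_succ a b
    rw [mul_div_right_comm, mul_assoc, h]
    field_simp
  calc _ = mu * ((b : ℝ) + 1) / ((a : ℝ) + b + 1) * ((a + (b + 1)).choose a : ℕ)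
        * (1 - (l1 + lt) / mu) * (l1 / mu) ^ a * (lt / mu) * (lt / mu) ^ b := by
        rw [freeProductForm, pow_succ]
        ring
    _ = _ := by
      rw [hchoose, freeProductForm]
      field_simp

theorem levelSum_freeProductForm (n : ℕ) :
    levelSum (freeProductForm l1 lt mu) n = (1 - (l1 + lt) / mu) * ((l1 + lt) / mu) ^ n := by
  rw [add_div, (Commute.all _ _).add_pow', mul_sum, levelSum]
  refine sum_congr rfl fun x hx => ?_
  rw [freeProductForm, HasAntidiagonal.mem_antidiagonal.mp hx, nsmul_eq_mul]
  ring

theorem freeProductForm_nonneg (hl1 : 0 ≤ l1) (hlt : 0 ≤ lt) (hmu : 0 < mu)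
    (hload : l1 + lt ≤ mu) (x : ℕ × ℕ) : 0 ≤ freeProductForm l1 lt mu x := by
  have : 0 ≤ 1 - (l1 + lt) / mu := sub_nonneg.mpr ((div_le_one hmu).mpr hload)
  unfold freeProductForm
  positivity

theorem hasSum_freeProductForm (hl1 : 0 ≤ l1) (hlt : 0 ≤ lt) (hmu : 0 < mu)
    (hload : l1 + lt < mu) : HasSum (freeProductForm l1 lt mu) 1 := by
  have hρ : (l1 + lt) / mu < 1 := (div_lt_one hmu).mpr hload
  rw [← hasSum_levelSum_iff (freeProductForm_nonneg hl1 hlt hmu hload.le),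
    funext levelSum_freeProductForm]
  have h := (hasSum_geometric_of_lt_one (by positivity) hρ).mul_left (1 - (l1 + lt) / mu)
  rwa [mul_inv_cancel₀ (sub_pos.mpr hρ).ne'] at h

theorem isStationaryFree_freeProductForm (hl1 : 0 ≤ l1) (hlt : 0 ≤ lt) (hmu : 0 < mu)
    (hload : l1 + lt < mu) : IsStationaryFree l1 lt mu 0 (freeProductForm l1 lt mu) :=
  isStationaryFree_of_detailed_balance (freeProductForm_nonneg hl1 hlt hmu hload.le)
    (hasSum_freeProductForm hl1 hlt hmu hload) (freeProductForm_detailed_balance_fst hmu.ne')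
    (freeProductForm_detailed_balance_snd hmu.ne')

end ProductForm

/-- Lemma 1.1 (θ = 0 case): the free chain admits a stationary distribution iff
λ₁ + λ_tot < μ, in which case every stationary distribution has finite mean. -/
theorem free_chain_stability_zero_theta
    (l1 lt mu : ℝ) (hl1 : 0 < l1) (hlt : 0 < lt) (hmu : 0 < mu) :
    ((∃ π, IsStationaryFree l1 lt mu 0 π) ↔ l1 + lt < mu) ∧
    (l1 + lt < mu →
      ∀ π, IsStationaryFree l1 lt mu 0 π →
        Summable (fun x : ℕ × ℕ => ((x.1 : ℝ) + (x.2 : ℝ)) * π x)) := by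
  refine ⟨⟨fun ⟨π, hπ⟩ => ?_, fun hload => ?_⟩, fun _ π hπ => hπ.summable_mean hmu.ne'⟩
  · exact (div_lt_one hmu).mp (lt_of_abs_lt (hπ.norm_load_lt_one hmu.ne'))
  · exact ⟨_, isStationaryFree_freeProductForm hl1.le hlt.le hmu hload⟩
end

section
/- Let π be a stationary distribution of the free chain with parameters (λ₁, λ_tot, μ, θ) such that Σ_{x∈ℕ²} x₂·π(x) < ∞. Then the flow-balance identity λ₁ + λ_tot = μ·(1 − π(0,0)) + θ·Σ_{x∈ℕ²} x₂·π(x) holds. -/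
/-!
Group the states by their total population `n = x₁ + x₂`. Summing the balance equations over
the levels `0, …, n` shows that the probability flux across the cut between levels `n` and
`n + 1` balances: `(λ₁ + λ_tot) · π(level n) = ∑_{x ∈ level n+1} (μ + θ x₂) π(x)`. Summing these
cut equations over `n` gives the identity; only `x₂` has to be integrable, because the total
departure rate of a state `x ≠ 0` is `μ + θ x₂`, whatever `x₁` is.
-/

open Filter Topology

open Finset

theorem HasSum.sum_antidiagonal {A M : Type*} [AddMonoid A] [HasAntidiagonal A]
    [AddCommMonoid M] [TopologicalSpace M] [ContinuousAdd M] [RegularSpace M]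
    {f : A × A → M} {a : M} (hf : HasSum f a) : HasSum (fun n ↦ ∑ x ∈ antidiagonal n, f x) a := by
  refine ((HasAntidiagonal.sigmaAntidiagonalEquivProd.hasSum_iff).2 hf).sigma fun n ↦ ?_
  rw [← sum_coe_sort]
  exact hasSum_fintype _

namespace Finset.Nat

theorem sum_antidiagonal_succ_ite_fst_s2 {M : Type*} [AddCommMonoid M] (g : ℕ × ℕ → M) (n : ℕ) :
    ∑ x ∈ antidiagonal (n + 1), (if 1 ≤ x.1 then g (x.1 - 1, x.2) else 0)
      = ∑ x ∈ antidiagonal n, g x := by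
  simp [sum_antidiagonal_succ]

theorem sum_antidiagonal_succ_ite_snd_s2 {M : Type*} [AddCommMonoid M] (g : ℕ × ℕ → M) (n : ℕ) :
    ∑ x ∈ antidiagonal (n + 1), (if 1 ≤ x.2 then g (x.1, x.2 - 1) else 0)
      = ∑ x ∈ antidiagonal n, g x := by
  simp [sum_antidiagonal_succ']

end Finset.Nat

open Finset.Nat

/-- The service rates `μ x₁/(x₁+x₂)` and `μ x₂/(x₁+x₂) + θ x₂` out of a state add up to
`μ + θ x₂`. -/
theorem sum_antidiagonal_departures (mu th : ℝ) (π : ℕ × ℕ → ℝ) (n : ℕ) :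
    ∑ x ∈ antidiagonal n,
      (mu * ((x.1 : ℝ) + 1) / ((x.1 : ℝ) + 1 + (x.2 : ℝ)) * π (x.1 + 1, x.2)
        + (mu * ((x.2 : ℝ) + 1) / ((x.1 : ℝ) + (x.2 : ℝ) + 1) + th * ((x.2 : ℝ) + 1))
          * π (x.1, x.2 + 1))
      = ∑ x ∈ antidiagonal (n + 1), (mu + th * (x.2 : ℝ)) * π x := by
  have h1 := sum_antidiagonal_succ (n := n)
    (f := fun y ↦ mu * (y.1 : ℝ) / ((y.1 : ℝ) + y.2) * π y)
  have h2 := sum_antidiagonal_succ' (n := n)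
    (f := fun y ↦ (mu * (y.2 : ℝ) / ((y.1 : ℝ) + y.2) + th * y.2) * π y)
  simp only [Nat.cast_add, Nat.cast_one, Nat.cast_zero, mul_zero, zero_div, zero_mul,
    zero_add, add_zero, ← add_assoc] at h1 h2
  rw [sum_add_distrib, ← h1, ← h2, ← sum_add_distrib]
  refine sum_congr rfl fun x hx ↦ ?_
  have hx : (x.1 : ℝ) + x.2 = n + 1 := by exact_mod_cast mem_antidiagonal.1 hx
  rw [hx]
  field_simp
  linear_combination π x * mu * hx

namespace IsStationaryFree

variable {l1 lt mu th : ℝ} {π : ℕ × ℕ → ℝ}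

theorem sum_antidiagonal_balance (hπ : IsStationaryFree l1 lt mu th π) (n : ℕ) :
    ∑ x ∈ antidiagonal n, π x * (l1 + lt + (if x ≠ (0, 0) then mu else 0) + th * x.2)
      = l1 * ∑ x ∈ antidiagonal n, (if 1 ≤ x.1 then π (x.1 - 1, x.2) else 0)
        + lt * ∑ x ∈ antidiagonal n, (if 1 ≤ x.2 then π (x.1, x.2 - 1) else 0)
        + ∑ x ∈ antidiagonal (n + 1), (mu + th * (x.2 : ℝ)) * π x := by
  rw [← sum_antidiagonal_departures mu th π n, mul_sum, mul_sum, ← sum_add_distrib,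
    ← sum_add_distrib]
  refine sum_congr rfl fun x _ ↦ ?_
  rw [hπ.2.2 x.1 x.2]
  ring

theorem departures_eq_arrivals (hπ : IsStationaryFree l1 lt mu th π) (n : ℕ) :
    ∑ x ∈ antidiagonal (n + 1), (mu + th * (x.2 : ℝ)) * π x
      = (l1 + lt) * ∑ x ∈ antidiagonal n, π x := by
  induction n with
  | zero =>
    simpa [mul_comm] using (hπ.sum_antidiagonal_balance 0).symm
  | succ n ih =>
    have h := hπ.sum_antidiagonal_balance (n + 1)
    rw [sum_antidiagonal_succ_ite_fst_s2, sum_antidiagonal_succ_ite_snd_s2] at h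
    have hlhs : ∑ x ∈ antidiagonal (n + 1),
        π x * (l1 + lt + (if x ≠ (0, 0) then mu else 0) + th * x.2)
          = (l1 + lt) * ∑ x ∈ antidiagonal (n + 1), π x
            + ∑ x ∈ antidiagonal (n + 1), (mu + th * (x.2 : ℝ)) * π x := by
      rw [mul_sum, ← sum_add_distrib]
      refine sum_congr rfl fun x hx ↦ ?_
      have hx0 : x ≠ (0, 0) := by rintro rfl; simp at hx
      rw [if_pos hx0]
      ring
    linear_combination -h + hlhs + ih

end IsStationaryFree

theorem free_chain_flow_balance_general
    (l1 lt mu th : ℝ)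
    (π : ℕ × ℕ → ℝ) (hπ : IsStationaryFree l1 lt mu th π)
    (hsum : Summable (fun x : ℕ × ℕ => (x.2 : ℝ) * π x)) :
    l1 + lt = mu * (1 - π (0, 0)) + th * ∑' x : ℕ × ℕ, (x.2 : ℝ) * π x := by
  have hmass : HasSum (fun n ↦ ∑ x ∈ antidiagonal n, π x) 1 := hπ.2.1.sum_antidiagonal
  have hdep : HasSum (fun n : ℕ ↦ ∑ x ∈ antidiagonal n, (mu + th * (x.2 : ℝ)) * π x)
      (mu + th * ∑' x : ℕ × ℕ, (x.2 : ℝ) * π x) := by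
    refine HasSum.sum_antidiagonal ?_
    simpa only [add_mul, mul_assoc, mul_one] using
      (hπ.2.1.mul_left mu).add (hsum.hasSum.mul_left th)
  have hcut := (hasSum_nat_add_iff' 1).2 hdep
  simp only [hπ.departures_eq_arrivals] at hcut
  have := hcut.unique (hmass.mul_left (l1 + lt))
  simp only [range_one, sum_singleton, HasAntidiagonal.antidiagonal_zero, CharP.cast_eq_zero,
    mul_zero, add_zero, mul_one] at this
  linear_combination -this

/-- Flow balance identity: λ₁ + λ_tot = μ·(1 − π(0,0)) + θ·E[X₂]. -/
theorem free_chain_flow_balance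
    (l1 lt mu th : ℝ) (hl1 : 0 < l1) (hlt : 0 < lt) (hmu : 0 < mu) (hth : 0 ≤ th)
    (π : ℕ × ℕ → ℝ) (hπ : IsStationaryFree l1 lt mu th π)
    (hsum : Summable (fun x : ℕ × ℕ => (x.2 : ℝ) * π x)) :
    l1 + lt = mu * (1 - π (0, 0)) + th * ∑' x : ℕ × ℕ, (x.2 : ℝ) * π x :=
  free_chain_flow_balance_general l1 lt mu th π hπ hsum
end

section
/- Let λ₁, λ_tot, μ, θ > 0 and ℓ > 0, and consider the Y′-chain: the continuous-time Markov chain on ℕ² whose nonzero transition rates from y = (y₁, y₂) are: to (y₁+1, y₂) at rate λ₁; to (y₁, y₂+1) at rate λ_tot; to (y₁−1, y₂) at rate (μ y₁/(y₁+ℓ))·1{y₂ ≤ ℓ}; to (y₁, y₂−1) at rate θ y₂. Then every stationary distribution π of the Y′-chain has Poisson(λ_tot/θ) second marginal: for every n ∈ ℕ, Σ_{y₁∈ℕ} π(y₁, n) = e^{−λ_tot/θ}·(λ_tot/θ)^n/n!. -/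
open Filter Topology

/-- `π` is a stationary distribution of the `Y′`-chain with parameters
`(l1, lt, mu, th)` and threshold `ℓ`: births of the first coordinate at rate `l1`,
births of the second at rate `lt`, deaths of the first at rate
`μ y₁/(y₁+ℓ)·1{y₂ ≤ ℓ}` and deaths of the second at rate `θ y₂`. -/
def IsStationaryYprime (l1 lt mu th ℓ : ℝ) (π : ℕ × ℕ → ℝ) : Prop :=
  (∀ y, 0 ≤ π y) ∧ HasSum π 1 ∧
    ∀ y1 y2 : ℕ,
      π (y1, y2) * (l1 + lt
          + (if (y2 : ℝ) ≤ ℓ then mu * (y1 : ℝ) / ((y1 : ℝ) + ℓ) else 0)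
          + th * (y2 : ℝ))
        = l1 * (if 1 ≤ y1 then π (y1 - 1, y2) else 0)
          + lt * (if 1 ≤ y2 then π (y1, y2 - 1) else 0)
          + (if (y2 : ℝ) ≤ ℓ then mu * ((y1 : ℝ) + 1) / ((y1 : ℝ) + 1 + ℓ) else 0)
              * π (y1 + 1, y2)
          + th * ((y2 : ℝ) + 1) * π (y1, y2 + 1)

/-- The second marginal of any stationary distribution of the Y′-chain is
Poisson(λ_tot/θ). -/
theorem Yprime_second_marginal_poisson
    (l1 lt mu th ℓ : ℝ) (hl1 : 0 < l1) (hlt : 0 < lt) (hmu : 0 < mu)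
    (hth : 0 < th) (hℓ : 0 < ℓ)
    (π : ℕ × ℕ → ℝ) (hπ : IsStationaryYprime l1 lt mu th ℓ π) :
    ∀ n : ℕ, ∑' y1 : ℕ, π (y1, n)
      = Real.exp (-lt / th) * (lt / th) ^ n / (Nat.factorial n) := by
  obtain ⟨hpos, hsum1, hbal⟩ := hπ
  have hsum : Summable π := hsum1.summable
  have hsec : ∀ n : ℕ, Summable (fun y1 => π (y1, n)) := fun n =>
    hsum.comp_injective (fun a b h => by simpa using congrArg Prod.fst h :
      Function.Injective (fun y1 : ℕ => (y1, n)))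
  set S : ℕ → ℝ := fun n => ∑' y1, π (y1, n) with hSdef
  have hShs : ∀ n, HasSum (fun y1 => π (y1, n)) (S n) := fun n => (hsec n).hasSum
  -- key recurrence
  have hrec : ∀ n : ℕ, (lt + th * n) * S n
      = lt * (if 1 ≤ n then S (n - 1) else 0) + th * (n + 1) * S (n + 1) := by
    intro n
    set r : ℕ → ℝ := fun y1 => if (n : ℝ) ≤ ℓ then mu * (y1 : ℝ) / ((y1 : ℝ) + ℓ) else 0
      with hrdef
    have hr0 : r 0 = 0 := by simp [hrdef]
    have hrnonneg : ∀ y1, 0 ≤ r y1 := by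
      intro y1
      simp only [hrdef]
      split
      · positivity
      · exact le_rfl
    have hrle : ∀ y1, r y1 ≤ mu := by
      intro y1
      simp only [hrdef]
      split
      · rw [div_le_iff₀ (by positivity)]
        nlinarith [Nat.cast_nonneg (α := ℝ) y1]
      · exact hmu.le
    have hT : Summable (fun y1 => r y1 * π (y1, n)) := by
      apply Summable.of_nonneg_of_le (fun y1 => mul_nonneg (hrnonneg y1) (hpos _))
        (fun y1 => mul_le_mul_of_nonneg_right (hrle y1) (hpos _))
      exact (hsec n).mul_left mu
    have hTsucc : Summable (fun y1 => r (y1 + 1) * π (y1 + 1, n)) :=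
      (summable_nat_add_iff 1).mpr hT
    have hG : Summable (fun y1 : ℕ => if 1 ≤ y1 then π (y1 - 1, n) else 0) := by
      apply (summable_nat_add_iff 1).mp
      simpa using hsec n
    have hB : Summable (fun _y1 : ℕ => lt * (if 1 ≤ n then π (_y1, n - 1) else 0)) := by
      split
      · exact (hsec (n - 1)).mul_left lt
      · simpa using summable_zero
    -- pointwise identity
    have hpt : ∀ y1 : ℕ,
        π (y1, n) * (l1 + lt + th * n) + r y1 * π (y1, n)
          = l1 * (if 1 ≤ y1 then π (y1 - 1, n) else 0)
            + lt * (if 1 ≤ n then π (y1, n - 1) else 0)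
            + r (y1 + 1) * π (y1 + 1, n)
            + th * (n + 1) * π (y1, n + 1) := by
      intro y1
      have h := hbal y1 n
      have hrs : r (y1 + 1) = if (n : ℝ) ≤ ℓ then mu * ((y1 : ℝ) + 1) / ((y1 : ℝ) + 1 + ℓ) else 0 := by
        simp [hrdef, Nat.cast_add]
      rw [hrs]
      simp only [hrdef]
      nlinarith [h]
    -- sum both sides
    have hL1 : Summable (fun y1 => π (y1, n) * (l1 + lt + th * n)) := (hsec n).mul_right _
    have hRS : Summable (fun y1 => l1 * (if 1 ≤ y1 then π (y1 - 1, n) else 0)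
        + lt * (if 1 ≤ n then π (y1, n - 1) else 0)
        + r (y1 + 1) * π (y1 + 1, n)) :=
      ((hG.mul_left l1).add hB).add hTsucc
    have hsumeq : ∑' y1, (π (y1, n) * (l1 + lt + th * n) + r y1 * π (y1, n))
        = ∑' y1, (l1 * (if 1 ≤ y1 then π (y1 - 1, n) else 0)
            + lt * (if 1 ≤ n then π (y1, n - 1) else 0)
            + r (y1 + 1) * π (y1 + 1, n)
            + th * (n + 1) * π (y1, n + 1)) := by
      exact tsum_congr hpt
    rw [Summable.tsum_add hL1 hT, Summable.tsum_add hRS (((hsec (n+1))).mul_left _),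
        Summable.tsum_add ((hG.mul_left l1).add hB) hTsucc,
        Summable.tsum_add (hG.mul_left l1) hB] at hsumeq
    have e1 : ∑' y1, π (y1, n) * (l1 + lt + th * n) = S n * (l1 + lt + th * n) :=
      tsum_mul_right
    have e2 : ∑' y1, l1 * (if 1 ≤ y1 then π (y1 - 1, n) else 0) = l1 * S n := by
      rw [tsum_mul_left]
      congr 1
      rw [Summable.tsum_eq_zero_add hG]
      simp [hSdef]
    have e3 : ∑' y1 : ℕ, lt * (if 1 ≤ n then π (y1, n - 1) else 0)
        = lt * (if 1 ≤ n then S (n - 1) else 0) := by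
      split
      · rw [tsum_mul_left]
      · simp
    have e4 : ∑' y1, r (y1 + 1) * π (y1 + 1, n) = ∑' y1, r y1 * π (y1, n) := by
      rw [Summable.tsum_eq_zero_add hT, hr0, zero_mul, zero_add]
    have e5 : ∑' y1, th * ((n : ℝ) + 1) * π (y1, n + 1) = th * (n + 1) * S (n + 1) :=
      tsum_mul_left
    rw [e1, e2, e3, e4, e5] at hsumeq
    linarith [hsumeq]
  -- detailed balance
  have hdb : ∀ n : ℕ, th * ((n : ℝ) + 1) * S (n + 1) = lt * S n := by
    intro n
    induction n with
    | zero => have h := hrec 0; simp at h ⊢; linarith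
    | succ k ih =>
        have h := hrec (k + 1)
        simp only [Nat.add_sub_cancel] at h
        have h1 : (1 : ℕ) ≤ k + 1 := Nat.le_add_left 1 k
        rw [if_pos h1] at h
        push_cast at h ⊢
        nlinarith [h, ih]
  -- closed form
  have hform : ∀ n : ℕ, S n = S 0 * (lt / th) ^ n / (Nat.factorial n) := by
    intro n
    induction n with
    | zero => simp
    | succ k ih =>
        have h := hdb k
        have hk1 : ((k : ℝ) + 1) ≠ 0 := by positivity
        have hfac : ((k + 1).factorial : ℝ) = ((k : ℝ) + 1) * (k.factorial : ℝ) := by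
          push_cast [Nat.factorial_succ]; ring
        have hfk : (k.factorial : ℝ) ≠ 0 := Nat.cast_ne_zero.mpr k.factorial_ne_zero
        rw [ih] at h
        rw [pow_succ, hfac]
        field_simp at h ⊢
        nlinarith [h]
  -- sum of marginals is 1
  have hS1 : HasSum S 1 := by
    have hswap : HasSum (fun p : ℕ × ℕ => π (p.2, p.1)) 1 := by
      have := (Equiv.prodComm ℕ ℕ).hasSum_iff (f := π) (a := 1)
      exact this.mpr hsum1
    exact hswap.prod_fiberwise (fun n => hShs n)
  have hexp : HasSum (fun n : ℕ => S 0 * ((lt / th) ^ n / (Nat.factorial n)))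
      (S 0 * Real.exp (lt / th)) := by
    have hexp' : HasSum (fun n : ℕ => (lt / th) ^ n / (Nat.factorial n)) (Real.exp (lt / th)) := by
      rw [Real.exp_eq_exp_ℝ, NormedSpace.exp_eq_tsum_div]
      apply Summable.hasSum
      exact (Real.summable_pow_div_factorial (lt / th))
    exact hexp'.mul_left (S 0)
  have hSeq : (fun n : ℕ => S 0 * ((lt / th) ^ n / (Nat.factorial n))) = S := by
    funext n
    rw [hform n]; ring
  rw [hSeq] at hexp
  have h1 : S 0 * Real.exp (lt / th) = 1 := hexp.unique hS1
  have hS0 : S 0 = Real.exp (-lt / th) := by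
    rw [neg_div, Real.exp_neg]
    exact eq_inv_of_mul_eq_one_left h1
  intro n
  have := hform n
  rw [hS0] at this
  rw [show (∑' y1 : ℕ, π (y1, n)) = S n from rfl, this]
end
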